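/- arXiv:2109.06653 — 2 statements merged into one kernel-verified Lean document; each statement's English description precedes it below -/
import Mathlib

section
/- Positivity of filtered inner products (1D): let $\mathcal{H} = B\,\mathrm{diag}(\hat{\mathcal F})\,F$ with filter coefficients $\hat{\mathcal F}_j \geq 0$. Then for any $Q \in \mathbb{R}^{N+1}$, the discrete inner product $\sum_{i=0}^N w_i Q_i (\mathcal{H} Q)_i \geq 0$. Equivalently, the matrix $W\mathcal{H}$ with $W = \mathrm{diag}(w_i)$ is positive semi-definite. -/
open Finset Matrix

/-- The discrete Gauss–Lobatto inner product with weights `w` and nodes `ξ`. -/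
noncomputable def discIP {N : ℕ} (w ξ : Fin (N + 1) → ℝ) (f g : ℝ → ℝ) : ℝ :=
  ∑ k : Fin (N + 1), w k * f (ξ k) * g (ξ k)

/-- Forward (nodal → modal) matrix `F_ij = ⟨l_j, L_i⟩_N / ‖L_i‖_N²`. -/
noncomputable def forwardMat {N : ℕ} (w ξ : Fin (N + 1) → ℝ)
    (l L : Fin (N + 1) → ℝ → ℝ) : Matrix (Fin (N + 1)) (Fin (N + 1)) ℝ :=
  Matrix.of fun i j => discIP w ξ (l j) (L i) / discIP w ξ (L i) (L i)

/-- Backward (modal → nodal) matrix `B_ij = ⟨L_j, l_i⟩_N / w_i`. -/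
noncomputable def backwardMat {N : ℕ} (w ξ : Fin (N + 1) → ℝ)
    (l L : Fin (N + 1) → ℝ → ℝ) : Matrix (Fin (N + 1)) (Fin (N + 1)) ℝ :=
  Matrix.of fun i j => discIP w ξ (L j) (l i) / w i

/-
The weights intertwine the two transforms: `w_i B_ij = ‖L_j‖²_N F_ji`, i.e. `W B = Fᵀ Λ` with
`Λ = diag ‖L_j‖²_N`. Hence `W (B diag(F̂) F) = Fᵀ (Λ diag(F̂)) F` is a congruence of a diagonal
matrix with nonnegative entries, so it is positive semidefinite, and its quadratic form is the
filtered discrete inner product.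
-/

theorem Matrix.posSemidef_diagonal_mul_mul_diagonal_mul {ι R : Type*} [Fintype ι] [DecidableEq ι]
    [CommRing R] [PartialOrder R] [StarRing R] [StarOrderedRing R]
    {A B : Matrix ι ι R} {w c d : ι → R} (hB : diagonal w * B = Aᴴ * diagonal c)
    (hc : ∀ i, 0 ≤ c i) (hd : ∀ i, 0 ≤ d i) :
    (diagonal w * (B * diagonal d * A)).PosSemidef := by
  rw [← Matrix.mul_assoc, ← Matrix.mul_assoc, hB, Matrix.mul_assoc Aᴴ, diagonal_mul_diagonal]
  exact (posSemidef_diagonal_iff.mpr fun i => mul_nonneg (hc i) (hd i)).conjTranspose_mul_mul_same A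

theorem Matrix.dotProduct_diagonal_mul_mulVec {ι R : Type*} [Fintype ι] [DecidableEq ι]
    [CommSemiring R] (w v : ι → R) (M : Matrix ι ι R) :
    v ⬝ᵥ (diagonal w * M) *ᵥ v = ∑ i, w i * v i * (M *ᵥ v) i := by
  rw [← mulVec_mulVec, dotProduct]
  exact sum_congr rfl fun i _ => by rw [mulVec_diagonal]; ring

theorem discIP_comm {N : ℕ} (w ξ : Fin (N + 1) → ℝ) (f g : ℝ → ℝ) :
    discIP w ξ f g = discIP w ξ g f :=
  sum_congr rfl fun _ _ => by ring

theorem diagonal_mul_backwardMat {N : ℕ} {w : Fin (N + 1) → ℝ} (ξ : Fin (N + 1) → ℝ)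
    (l L : Fin (N + 1) → ℝ → ℝ) (hw : ∀ i, w i ≠ 0)
    (hnorm : ∀ n, discIP w ξ (L n) (L n) ≠ 0) :
    diagonal w * backwardMat w ξ l L =
      (forwardMat w ξ l L)ᴴ * diagonal fun n => discIP w ξ (L n) (L n) := by
  ext i j
  simp only [diagonal_mul, mul_diagonal, conjTranspose_apply, star_trivial, forwardMat,
    backwardMat, of_apply, discIP_comm w ξ (l i) (L j)]
  field_simp [hw i, hnorm j]

theorem filtered_inner_product_nonneg_general {N : ℕ}
    (ξ w : Fin (N + 1) → ℝ) (l L : Fin (N + 1) → ℝ → ℝ)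
    (hw : ∀ i, 0 < w i)
    (hnorm : ∀ n, 0 < discIP w ξ (L n) (L n))
    (Fhat : Fin (N + 1) → ℝ) (hFhat : ∀ j, 0 ≤ Fhat j) :
    (∀ Q : Fin (N + 1) → ℝ,
      0 ≤ ∑ i : Fin (N + 1), w i * Q i *
        ((backwardMat w ξ l L * Matrix.diagonal Fhat * forwardMat w ξ l L).mulVec
          Q i)) ∧
    (Matrix.diagonal w *
      (backwardMat w ξ l L * Matrix.diagonal Fhat * forwardMat w ξ l L)).PosSemidef := by
  have hpsd := posSemidef_diagonal_mul_mul_diagonal_mul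
    (diagonal_mul_backwardMat ξ l L (fun i => (hw i).ne') fun n => (hnorm n).ne')
    (fun n => (hnorm n).le) hFhat
  refine ⟨fun Q => ?_, hpsd⟩
  rw [← dotProduct_diagonal_mul_mulVec]
  simpa using hpsd.dotProduct_mulVec_nonneg Q

/-- positivity of filtered inner products in 1D.  With
`H = B diag(F̂) F` and nonnegative filter coefficients `F̂_j ≥ 0`, the discrete
inner product `∑ w_i Q_i (H Q)_i` is nonnegative for every `Q`; equivalently,
`W * H` with `W = diag(w)` is positive semi-definite. -/
theorem filtered_inner_product_nonneg {N : ℕ} (hN : 1 ≤ N)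
    (ξ w : Fin (N + 1) → ℝ) (l L : Fin (N + 1) → ℝ → ℝ)
    (hξmono : StrictMono ξ) (hξmem : ∀ i, ξ i ∈ Set.Icc (-1 : ℝ) 1)
    (hw : ∀ i, 0 < w i)
    (hlag : ∀ i j, l j (ξ i) = if i = j then 1 else 0)
    (horth : ∀ n m, discIP w ξ (L n) (L m) =
      if n = m then discIP w ξ (L n) (L n) else 0)
    (hnorm : ∀ n, 0 < discIP w ξ (L n) (L n))
    (Fhat : Fin (N + 1) → ℝ) (hFhat : ∀ j, 0 ≤ Fhat j) :
    (∀ Q : Fin (N + 1) → ℝ,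
      0 ≤ ∑ i : Fin (N + 1), w i * Q i *
        ((backwardMat w ξ l L * Matrix.diagonal Fhat * forwardMat w ξ l L).mulVec
          Q i)) ∧
    (Matrix.diagonal w *
      (backwardMat w ξ l L * Matrix.diagonal Fhat * forwardMat w ξ l L)).PosSemidef :=
  filtered_inner_product_nonneg_general ξ w l L hw hnorm Fhat hFhat
end

section
/- Let $\mathcal{J} > 0$ be a positive function (diagonal positive matrix in the discrete setting), $\alpha \geq 0$ a nonnegative function, $C$ a symmetric positive semi-definite matrix, and $\mathcal{F}\star$ a filtering operator satisfying $\langle v, \mathcal{F}\star v\rangle_N \geq 0$ componentwise for all $v$. Then the filtered artificial flux $F_a^{\mathcal F} = \sqrt{\alpha/\mathcal{J}}\, C\, \mathcal{F}\star(\sqrt{\mathcal{J}\alpha}\, G)$ satisfies $\langle \mathcal{J} G, F_a^{\mathcal F}\rangle_N = \langle \sqrt{\mathcal{J}\alpha}\,G,\; C\,\mathcal{F}\star(\sqrt{\mathcal{J}\alpha}\,G)\rangle_N \geq 0$, provided $C$ commutes with $\mathcal{F}\star$ in the sense that $\langle u, C\,\mathcal{F}\star u\rangle_N \geq 0$ for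 all $u$ (which holds when $C$ is constant, symmetric PSD, and $\mathcal{F}\star$ acts componentwise with $\langle u, \mathcal{F}\star u\rangle_N \geq 0$ and symmetric weighted form). -/
/-!
Since `J * √(α / J) = √(J α)`, the entropy production is the quadratic form of the field
`u = √(J α) G` under the Kronecker product `(diag w * H) ⊗ₖ C`, and a Kronecker product of
positive semidefinite matrices is positive semidefinite.
-/

open Matrix
open scoped Kronecker

namespace Matrix

variable {ι κ R : Type*} [Fintype ι] [Fintype κ] [DecidableEq ι]

theorem sum_mul_dotProduct_mulVec_mul_eq_vec_dotProduct_kronecker [CommSemiring R]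
    (w : ι → R) (H : Matrix ι ι R) (C : Matrix κ κ R) (U : Matrix ι κ R) :
    ∑ i, w i * (U i ⬝ᵥ C *ᵥ (H * U) i) = vec Uᵀ ⬝ᵥ ((diagonal w * H) ⊗ₖ C) *ᵥ vec Uᵀ := by
  simp only [dotProduct, mulVec, mul_apply, kroneckerMap_apply, diagonal_apply, ite_mul, zero_mul,
    Finset.sum_ite_eq, Finset.mem_univ, if_true, Fintype.sum_prod_type, vec, transpose_apply,
    Finset.mul_sum]
  refine Fintype.sum_congr _ _ fun i => Fintype.sum_congr _ _ fun c => ?_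
  rw [Finset.sum_comm]
  exact Fintype.sum_congr _ _ fun k => Fintype.sum_congr _ _ fun d => by ring

theorem PosSemidef.sum_mul_dotProduct_mulVec_mul_nonneg {w : ι → ℝ} {H : Matrix ι ι ℝ}
    {C : Matrix κ κ ℝ} (hH : (diagonal w * H).PosSemidef) (hC : C.PosSemidef)
    (U : Matrix ι κ ℝ) : 0 ≤ ∑ i, w i * (U i ⬝ᵥ C *ᵥ (H * U) i) := by
  rw [sum_mul_dotProduct_mulVec_mul_eq_vec_dotProduct_kronecker]
  simpa using (hH.kronecker hC).dotProduct_mulVec_nonneg (vec Uᵀ)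

end Matrix

theorem Real.mul_sqrt_div_self {a : ℝ} (ha : 0 ≤ a) (b : ℝ) : a * √(b / a) = √(a * b) := by
  rcases ha.eq_or_lt with rfl | ha
  · simp
  rw [← Real.sqrt_sq ha.le, ← Real.sqrt_mul (sq_nonneg a), Real.sqrt_sq ha.le]
  congr 1
  field_simp

theorem filtered_artificial_flux_dissipation_nonneg_general {n m : ℕ}
    (w : Fin n → ℝ)
    (H : Matrix (Fin n) (Fin n) ℝ)
    (hH : (Matrix.diagonal w * H).PosSemidef)
    (C : Matrix (Fin m) (Fin m) ℝ) (hC : C.PosSemidef)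
    (J α : Fin n → ℝ) (hJ : ∀ i, 0 < J i)
    (G : Fin n → Fin m → ℝ) :
    let filt : Fin n → Fin m → ℝ := fun i c =>
      ∑ k : Fin n, H i k * (Real.sqrt (J k * α k) * G k c)
    let Fa : Fin n → Fin m → ℝ := fun i =>
      Real.sqrt (α i / J i) • C.mulVec (filt i)
    (∑ i : Fin n, w i * ((J i • G i) ⬝ᵥ Fa i)) =
      (∑ i : Fin n, w i *
        ((Real.sqrt (J i * α i) • G i) ⬝ᵥ C.mulVec (filt i))) ∧
    0 ≤ ∑ i : Fin n, w i * ((J i • G i) ⬝ᵥ Fa i) := by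
  intro filt Fa
  have flux_eq : ∑ i, w i * ((J i • G i) ⬝ᵥ Fa i) =
      ∑ i, w i * ((√(J i * α i) • G i) ⬝ᵥ C *ᵥ filt i) := by
    refine Finset.sum_congr rfl fun i _ => ?_
    simp only [Fa, smul_dotProduct, dotProduct_smul, smul_eq_mul]
    rw [← Real.mul_sqrt_div_self (hJ i).le]
    ring
  refine ⟨flux_eq, flux_eq ▸ ?_⟩
  exact hH.sum_mul_dotProduct_mulVec_mul_nonneg hC (of fun k c => √(J k * α k) * G k c)

/-- entropy stability of the SVV-filtered artificial flux
`F_a^F = √(α/J) C F⋆(√(Jα) G)`.  Here the nodal filter `H` acts componentwise,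
the weighted filter matrix `diag(w) * H` is symmetric positive semi-definite,
and `C` is a constant symmetric positive semi-definite matrix.  Then
`⟨J G, F_a^F⟩_N = ⟨√(Jα) G, C F⋆(√(Jα) G)⟩_N ≥ 0`. -/
theorem filtered_artificial_flux_dissipation_nonneg {n m : ℕ}
    (w : Fin n → ℝ) (hw : ∀ i, 0 < w i)
    (H : Matrix (Fin n) (Fin n) ℝ)
    (hH : (Matrix.diagonal w * H).PosSemidef)
    (C : Matrix (Fin m) (Fin m) ℝ) (hC : C.PosSemidef)
    (J α : Fin n → ℝ) (hJ : ∀ i, 0 < J i) (hα : ∀ i, 0 ≤ α i)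
    (G : Fin n → Fin m → ℝ) :
    let filt : Fin n → Fin m → ℝ := fun i c =>
      ∑ k : Fin n, H i k * (Real.sqrt (J k * α k) * G k c)
    let Fa : Fin n → Fin m → ℝ := fun i =>
      Real.sqrt (α i / J i) • C.mulVec (filt i)
    (∑ i : Fin n, w i * ((J i • G i) ⬝ᵥ Fa i)) =
      (∑ i : Fin n, w i *
        ((Real.sqrt (J i * α i) • G i) ⬝ᵥ C.mulVec (filt i))) ∧
    0 ≤ ∑ i : Fin n, w i * ((J i • G i) ⬝ᵥ Fa i) :=
  filtered_artificial_flux_dissipation_nonneg_general w H hH C hC J α hJ G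
end
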